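/- arXiv:2403.18429 — 2 statements merged into one kernel-verified Lean document; each statement's English description precedes it below -/
import Mathlib

section
/- There exists a finite simple connected graph G with at least two vertices such that μ(G) > max over all vertices v of G of (2·m_v²)/d_v. (This disproves conjectured vertex-maximum bound 2 of Brankov, Hansen and Stevanović.) -/
/-
Let `H` be the circulant graph on `ZMod 25` with jumps `±1, …, ±4` (8-regular) and `G` its cone,
i.e. `H` plus an apex joined to every vertex. If `w` is a universal vertex of a graph on `n`
vertices, then `L e_w = n e_w - 𝟙` and `L 𝟙 = 0`, so `n e_w - 𝟙` is a Laplacian eigenvector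
for the eigenvalue `n`; hence `μ(G) ≥ 26`. The apex has `d = 25`, `m = 9`, so `2m²/d = 162/25`,
and every other vertex has `d = 9`, `m = 97/9`, so `2m²/d = 18818/729 < 26`.
-/

noncomputable section

open Finset

/-- The degree of a vertex, as a real number. -/
def degR {V : Type*} [Fintype V] (G : SimpleGraph V) (v : V) : ℝ :=
  letI := Classical.decRel G.Adj
  (G.degree v : ℝ)

/-- The average degree of the neighbours of a vertex, as a real number:
`m_v = (∑_{u ~ v} d_u) / d_v`. -/
def avgDegR {V : Type*} [Fintype V] (G : SimpleGraph V) (v : V) : ℝ :=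
  letI := Classical.decRel G.Adj
  (∑ u ∈ G.neighborFinset v, (G.degree u : ℝ)) / (G.degree v : ℝ)

/-- The largest eigenvalue of the Laplacian matrix `L = D - A` of a finite graph. -/
def lapSpecRad {V : Type*} [Fintype V] [DecidableEq V] [Nonempty V]
    (G : SimpleGraph V) : ℝ :=
  letI := Classical.decRel G.Adj
  ⨆ i, (SimpleGraph.posSemidef_lapMatrix ℝ G).isHermitian.eigenvalues i

open Matrix

theorem Matrix.IsHermitian.le_iSup_eigenvalues_of_mulVec_eq {n : Type*} [Fintype n]
    [DecidableEq n] {A : Matrix n n ℝ} (hA : A.IsHermitian) {x : n → ℝ} (hx : x ≠ 0)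
    {c : ℝ} (h : A *ᵥ x = c • x) : c ≤ ⨆ i, hA.eigenvalues i := by
  have hc : c ∈ spectrum ℝ A := by
    rw [← Matrix.spectrum_toLin']
    exact Module.End.HasEigenvalue.mem_spectrum <| Module.End.hasEigenvalue_of_hasEigenvector
      ⟨by simpa [Module.End.mem_eigenspace_iff] using h, hx⟩
  obtain ⟨i, rfl⟩ := hA.spectrum_real_eq_range_eigenvalues ▸ hc
  exact le_ciSup (Set.finite_range _).bddAbove i

section

variable {V : Type*} [Fintype V] (G : SimpleGraph V) [DecidableRel G.Adj]

theorem degR_eq_degree (v : V) : degR G v = G.degree v := by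
  unfold degR; congr!

theorem avgDegR_eq (v : V) :
    avgDegR G v = (∑ u ∈ G.neighborFinset v, (G.degree u : ℝ)) / G.degree v := by
  unfold avgDegR; congr!

theorem le_lapSpecRad_of_lapMatrix_mulVec_eq [DecidableEq V] [Nonempty V] {x : V → ℝ}
    (hx : x ≠ 0) {c : ℝ} (h : G.lapMatrix ℝ *ᵥ x = c • x) : c ≤ lapSpecRad G := by
  unfold lapSpecRad
  convert (G.posSemidef_lapMatrix ℝ).isHermitian.le_iSup_eigenvalues_of_mulVec_eq hx h

end

namespace SimpleGraph

section Universal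

variable {V : Type*} [Fintype V] [DecidableEq V] {G : SimpleGraph V} [DecidableRel G.Adj]
  {w : V}

theorem IsUniversal.lapMatrix_mulVec_single (h : G.IsUniversal w) :
    G.lapMatrix ℝ *ᵥ Pi.single w 1 = (Fintype.card V : ℝ) • Pi.single w 1 - fun _ ↦ 1 := by
  ext v
  rw [lapMatrix_mulVec_apply, Finset.sum_pi_single']
  rcases eq_or_ne v w with rfl | hvw
  · have hcard : 1 ≤ Fintype.card V := Fintype.card_pos_iff.mpr ⟨v⟩
    simp [(G.degree_eq_card_sub_one v).mpr h, Nat.cast_sub hcard]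
  · simp [hvw, (h hvw.symm).symm]

theorem IsUniversal.card_le_lapSpecRad [Nontrivial V] (h : G.IsUniversal w) :
    (Fintype.card V : ℝ) ≤ lapSpecRad G := by
  set x : V → ℝ := (Fintype.card V : ℝ) • Pi.single w 1 - fun _ ↦ 1
  obtain ⟨v, hvw⟩ := exists_ne w
  have hx : x ≠ 0 := fun hx ↦ by simpa [x, hvw] using congrFun hx v
  refine le_lapSpecRad_of_lapMatrix_mulVec_eq G hx ?_
  rw [Matrix.mulVec_sub, Matrix.mulVec_smul, h.lapMatrix_mulVec_single,
    lapMatrix_mulVec_const_eq_zero, sub_zero]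

end Universal

section Cone

variable {V : Type*}

def cone (H : SimpleGraph V) : SimpleGraph (Option V) where
  Adj
    | none, none => False
    | some a, some b => H.Adj a b
    | _, _ => True
  symm := ⟨by rintro (_ | a) (_ | b) h <;> simp_all [H.adj_comm]⟩
  loopless := ⟨by rintro (_ | a) h <;> simp_all⟩

variable (H : SimpleGraph V)

@[simp] theorem cone_adj_none_some (a : V) : H.cone.Adj none (some a) := trivial
@[simp] theorem cone_adj_some_none (a : V) : H.cone.Adj (some a) none := trivial
@[simp] theorem cone_adj_some_some (a b : V) : H.cone.Adj (some a) (some b) ↔ H.Adj a b := Iff.rfl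

instance [DecidableRel H.Adj] : DecidableRel H.cone.Adj
  | none, none => isFalse id
  | some a, some b => inferInstanceAs (Decidable (H.Adj a b))
  | none, some _ => isTrue trivial
  | some _, none => isTrue trivial

theorem isUniversal_cone_none : H.cone.IsUniversal none := by
  rintro (_ | a) h
  · exact absurd rfl h
  · trivial

variable [Fintype V] [DecidableRel H.Adj]

theorem neighborFinset_cone_none : H.cone.neighborFinset none = univ.map .some := by
  ext (_ | a) <;> simp

theorem neighborFinset_cone_some (a : V) :
    H.cone.neighborFinset (some a) = cons none ((H.neighborFinset a).map .some) (by simp) := by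
  ext (_ | b) <;> simp

theorem sum_neighborFinset_cone_none {M : Type*} [AddCommMonoid M] (f : Option V → M) :
    ∑ u ∈ H.cone.neighborFinset none, f u = ∑ a, f (some a) := by
  rw [neighborFinset_cone_none, sum_map]
  rfl

theorem sum_neighborFinset_cone_some {M : Type*} [AddCommMonoid M] (f : Option V → M) (a : V) :
    ∑ u ∈ H.cone.neighborFinset (some a), f u =
      f none + ∑ b ∈ H.neighborFinset a, f (some b) := by
  rw [neighborFinset_cone_some, sum_cons, sum_map]
  rfl

theorem degree_cone_none : H.cone.degree none = Fintype.card V := by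
  simp [← card_neighborFinset_eq_degree, neighborFinset_cone_none]

theorem degree_cone_some (a : V) : H.cone.degree (some a) = H.degree a + 1 := by
  simp [← card_neighborFinset_eq_degree, neighborFinset_cone_some]

end Cone

section RegularCone

variable {V : Type*} [Fintype V] {H : SimpleGraph V} [DecidableRel H.Adj] {k : ℕ}

theorem IsRegularOfDegree.avgDegR_cone_none [Nonempty V] (hH : H.IsRegularOfDegree k) :
    avgDegR H.cone none = k + 1 := by
  simp only [avgDegR_eq, sum_neighborFinset_cone_none, degree_cone_some, hH.degree_eq,
    degree_cone_none, sum_const, card_univ, nsmul_eq_mul]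
  field_simp
  push_cast
  ring

theorem IsRegularOfDegree.avgDegR_cone_some (hH : H.IsRegularOfDegree k) (a : V) :
    avgDegR H.cone (some a) = (Fintype.card V + k * (k + 1)) / (k + 1) := by
  simp only [avgDegR_eq, sum_neighborFinset_cone_some, degree_cone_some, hH.degree_eq,
    degree_cone_none, sum_const, card_neighborFinset_eq_degree, nsmul_eq_mul]
  push_cast
  ring

theorem IsRegularOfDegree.two_mul_avgDegR_sq_div_degR_cone_lt_lapSpecRad [Nonempty V]
    [DecidableEq V] (hH : H.IsRegularOfDegree k)
    (h_none : 2 * ((k : ℝ) + 1) ^ 2 / Fintype.card V < Fintype.card V + 1)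
    (h_some : 2 * ((Fintype.card V + k * (k + 1)) / (k + 1)) ^ 2 / (k + 1) <
      (Fintype.card V : ℝ) + 1) (v : Option V) :
    2 * avgDegR H.cone v ^ 2 / degR H.cone v < lapSpecRad H.cone := by
  have hμ := (isUniversal_cone_none H).card_le_lapSpecRad
  rw [Fintype.card_option, Nat.cast_succ] at hμ
  refine lt_of_lt_of_le ?_ hμ
  rcases v with _ | a
  · rwa [hH.avgDegR_cone_none, degR_eq_degree, degree_cone_none]
  · rw [hH.avgDegR_cone_some, degR_eq_degree, degree_cone_some, hH.degree_eq]
    exact_mod_cast h_some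

end RegularCone

theorem isRegularOfDegree_circulantGraph :
    (circulantGraph ({1, 2, 3, 4} : Set (ZMod 25))).IsRegularOfDegree 8 := by
  unfold IsRegularOfDegree
  decide

end SimpleGraph

/-- There exists a finite simple connected graph `G` with at least two vertices whose
Laplacian spectral radius exceeds the conjectured vertex-maximum bound. -/
theorem exists_counterexample_bound2 :
    ∃ (V : Type) (_ : Fintype V) (_ : DecidableEq V) (_ : Nonempty V)
      (G : SimpleGraph V), G.Connected ∧ 2 ≤ Fintype.card V ∧
      ∀ v : V, (fun d m => 2 * m ^ 2 / d) (degR G v) (avgDegR G v) < lapSpecRad G := by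
  have hH := SimpleGraph.isRegularOfDegree_circulantGraph
  refine ⟨_, inferInstance, inferInstance, inferInstance, _,
    .of_isUniversal (SimpleGraph.isUniversal_cone_none _), by simp,
    hH.two_mul_avgDegR_sq_div_degR_cone_lt_lapSpecRad ?_ ?_⟩ <;> norm_num
end
end

section
/- There exists a finite simple connected graph G with at least two vertices such that μ(G) > max over all vertices v of G of (m_v²/d_v + m_v). (This disproves conjectured vertex-maximum bound 3 of Brankov, Hansen and Stevanović.) -/
noncomputable section

open Finset

/-!
A universal vertex `c` of a graph on `n` vertices makes `n` a Laplacian eigenvalue, with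
eigenvector `n • e_c - 𝟙`, so `μ(G) ≥ n`. The cone over four disjoint
copies of `K₅` has `n = 21`, while the vertex bound `m_v² / d_v + m_v` equals
`5² / 20 + 5` at the apex and `8² / 5 + 8 = 20.8` at every other vertex.
-/

open Matrix

lemma Matrix.IsHermitian.le_iSup_eigenvalues {n : Type*} [Fintype n] [DecidableEq n]
    {A : Matrix n n ℝ} (hA : A.IsHermitian) {x : n → ℝ} (hx : x ≠ 0) {μ : ℝ}
    (h : A *ᵥ x = μ • x) : μ ≤ ⨆ i, hA.eigenvalues i := by
  have hμ : μ ∈ spectrum ℝ A := by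
    rw [← Matrix.spectrum_toLin', ← Module.End.hasEigenvalue_iff_mem_spectrum]
    exact Module.End.hasEigenvalue_of_hasEigenvector
      ⟨Module.End.mem_eigenspace_iff.mpr (by simpa using h), hx⟩
  obtain ⟨i, rfl⟩ := hA.spectrum_real_eq_range_eigenvalues ▸ hμ
  exact le_ciSup (Set.finite_range _).bddAbove i

namespace SimpleGraph

variable {V : Type*} [Fintype V] (G : SimpleGraph V)

lemma degR_eq [DecidableRel G.Adj] (v : V) : degR G v = G.degree v := by
  unfold degR
  congr!

lemma avgDegR_eq [DecidableRel G.Adj] (v : V) :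
    avgDegR G v = (∑ u ∈ G.neighborFinset v, (G.degree u : ℝ)) / G.degree v := by
  unfold avgDegR
  congr!

lemma lapMatrix_mulVec_single_of_isUniversal [DecidableEq V] [DecidableRel G.Adj] {c : V}
    (hc : G.IsUniversal c) :
    G.lapMatrix ℝ *ᵥ Pi.single c 1 = (Fintype.card V : ℝ) • Pi.single c 1 - 1 := by
  ext v
  rw [lapMatrix_mulVec_apply, Finset.sum_pi_single']
  by_cases hv : v = c
  · subst hv
    have hdeg := (G.degree_eq_card_sub_one v).mpr hc
    have hcard : 1 ≤ Fintype.card V := Fintype.card_pos_iff.mpr ⟨v⟩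
    simp [hdeg, Nat.cast_sub hcard]
  · simp [hv, (hc (Ne.symm hv)).symm]

lemma card_le_lapSpecRad_of_isUniversal [DecidableEq V] [Nontrivial V] {c : V}
    (hc : G.IsUniversal c) :
    (Fintype.card V : ℝ) ≤ lapSpecRad G := by
  classical
  obtain ⟨v, hv⟩ := exists_ne c
  unfold lapSpecRad
  apply IsHermitian.le_iSup_eigenvalues _ (x := (Fintype.card V : ℝ) • Pi.single c 1 - 1)
  · intro h
    simpa [hv] using congrFun h v
  · rw [mulVec_sub, mulVec_smul, G.lapMatrix_mulVec_single_of_isUniversal hc,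
      show (1 : V → ℝ) = fun _ ↦ 1 from rfl, lapMatrix_mulVec_const_eq_zero, sub_zero, smul_sub]

end SimpleGraph

/-- The cone over four disjoint copies of `K₅`: the apex is `0`, the cliques are `1, …, 5`,
`6, …, 10`, `11, …, 15` and `16, …, 20`. -/
def coneFourK5 : SimpleGraph (Fin 21) where
  Adj i j := i ≠ j ∧ (i = 0 ∨ j = 0 ∨ ((i : ℕ) - 1) / 5 = ((j : ℕ) - 1) / 5)
  symm := ⟨fun _ _ ⟨hne, h⟩ => ⟨hne.symm, by tauto⟩⟩
  loopless := ⟨fun _ h => h.1 rfl⟩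

instance : DecidableRel coneFourK5.Adj := fun i j =>
  inferInstanceAs (Decidable (i ≠ j ∧ (i = 0 ∨ j = 0 ∨ ((i : ℕ) - 1) / 5 = ((j : ℕ) - 1) / 5)))

lemma coneFourK5_isUniversal_zero : coneFourK5.IsUniversal 0 := fun _ h => ⟨h, Or.inl rfl⟩

lemma coneFourK5_degree : ∀ v, coneFourK5.degree v = if v = 0 then 20 else 5 := by decide

lemma coneFourK5_sum_degree_neighbors :
    ∀ v, ∑ u ∈ coneFourK5.neighborFinset v, coneFourK5.degree u = if v = 0 then 100 else 40 := by
  decide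

lemma degR_coneFourK5 (v : Fin 21) : degR coneFourK5 v = if v = 0 then 20 else 5 := by
  rw [coneFourK5.degR_eq, coneFourK5_degree]
  split_ifs <;> norm_num

lemma avgDegR_coneFourK5 (v : Fin 21) : avgDegR coneFourK5 v = if v = 0 then 5 else 8 := by
  rw [coneFourK5.avgDegR_eq, ← Nat.cast_sum, coneFourK5_sum_degree_neighbors, coneFourK5_degree]
  split_ifs <;> norm_num

/-- There exists a finite simple connected graph `G` with at least two vertices whose
Laplacian spectral radius exceeds the conjectured vertex-maximum bound. -/
theorem exists_counterexample_bound3 :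
    ∃ (V : Type) (_ : Fintype V) (_ : DecidableEq V) (_ : Nonempty V)
      (G : SimpleGraph V), G.Connected ∧ 2 ≤ Fintype.card V ∧
      ∀ v : V, (fun d m => m ^ 2 / d + m) (degR G v) (avgDegR G v) < lapSpecRad G := by
  refine ⟨Fin 21, inferInstance, inferInstance, inferInstance, coneFourK5,
    .of_isUniversal coneFourK5_isUniversal_zero, by simp, fun v => ?_⟩
  have hμ := coneFourK5.card_le_lapSpecRad_of_isUniversal coneFourK5_isUniversal_zero
  rw [Fintype.card_fin] at hμ
  refine lt_of_lt_of_le ?_ hμ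
  simp only [degR_coneFourK5, avgDegR_coneFourK5]
  split_ifs <;> norm_num
end
end
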